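/- arXiv:2405.11634 — 7 statements merged into one kernel-verified Lean document; each statement's English description precedes it below -/
import Mathlib

section
/- Suppose the set of regular points of the operator pencil P(λ) = λE − A is nonempty. Then every point of the topological boundary (in ℂ) of the set s(P) of singular points of P is an approximate singularity of P, i.e., for every boundary point λ0 of s(P) there exist unit vectors x_n ∈ D(A) with (λ0E − A)x_n → 0. -/
open Filter Topology

noncomputable section

variable {X Y : Type*}
  [NormedAddCommGroup X] [InnerProductSpace ℂ X] [CompleteSpace X]
  [NormedAddCommGroup Y] [InnerProductSpace ℂ Y] [CompleteSpace Y]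

/-- `lam` is a regular point of the operator pencil `P(λ) = λE - A`:
the operator `λE - A : D(A) → Y` is bijective with bounded inverse. -/
def IsRegularPoint (E : X →L[ℂ] Y) (A : X →ₗ.[ℂ] Y) (lam : ℂ) : Prop :=
  ∃ T : Y →L[ℂ] X,
    (∀ x : A.domain, T (lam • E (x : X) - A x) = (x : X)) ∧
    (∀ y : Y, ∃ x : A.domain, (x : X) = T y ∧ lam • E (x : X) - A x = y)

/-- `lam` is an approximate singularity of the pencil `P(λ) = λE - A`:
there are unit vectors `xₙ ∈ D(A)` with `(λE - A)xₙ → 0`. -/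
def IsApproxSingularity (E : X →L[ℂ] Y) (A : X →ₗ.[ℂ] Y) (lam : ℂ) : Prop :=
  ∃ x : ℕ → A.domain, (∀ n, ‖(x n : X)‖ = 1) ∧
    Tendsto (fun n => lam • E ((x n : X)) - A (x n)) atTop (𝓝 (0 : Y))

/-!
The resolvent `T = (λE - A)⁻¹` at a regular point `λ` gives `μE - A = (1 + (μ - λ)ET)(λE - A)`,
so by a Neumann series every `μ` with `|μ - λ| ‖ET‖ < 1` is regular. Hence the regular set is
open, a boundary point `λ₀` of the singular set is singular and is approached by regular points
`λ` with `‖ET‖ ≥ 1 / |λ₀ - λ|`. A vector `y` nearly attaining this norm yields `x = Ty` with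
`(λ₀E - A)x = y + (λ₀ - λ)Ex` of size `O(|λ₀ - λ| ‖x‖)`.
-/

section Pencil

omit [CompleteSpace X]

variable (E : X →L[ℂ] Y) (A : X →ₗ.[ℂ] Y)

def IsPencilInverse (lam : ℂ) (T : Y →L[ℂ] X) : Prop :=
  (∀ x : A.domain, T (lam • E (x : X) - A x) = (x : X)) ∧
    (∀ y : Y, ∃ x : A.domain, (x : X) = T y ∧ lam • E (x : X) - A x = y)

variable {E A}

omit [CompleteSpace Y] in
theorem isRegularPoint_iff_exists_isPencilInverse {lam : ℂ} :
    IsRegularPoint E A lam ↔ ∃ T, IsPencilInverse E A lam T :=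
  Iff.rfl

omit [CompleteSpace Y] in
theorem IsPencilInverse.comp_symm {lam μ : ℂ} {T : Y →L[ℂ] X} (hT : IsPencilInverse E A lam T)
    (e : Y ≃L[ℂ] Y) (he : ∀ x : A.domain, e (lam • E (x : X) - A x) = μ • E (x : X) - A x) :
    IsPencilInverse E A μ (T.comp (e.symm : Y →L[ℂ] Y)) := by
  refine ⟨fun x => ?_, fun y => ?_⟩
  · simp only [ContinuousLinearMap.comp_apply, ContinuousLinearEquiv.coe_coe, ← he x,
      e.symm_apply_apply, hT.1 x]
  · obtain ⟨x, hxT, hxy⟩ := hT.2 (e.symm y)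
    exact ⟨x, hxT, by rw [← he x, hxy, e.apply_symm_apply]⟩

theorem IsPencilInverse.isRegularPoint_of_norm_sub_mul_lt {lam μ : ℂ} {T : Y →L[ℂ] X}
    (hT : IsPencilInverse E A lam T) (hμ : ‖μ - lam‖ * ‖E.comp T‖ < 1) :
    IsRegularPoint E A μ := by
  set t : Y →L[ℂ] Y := (μ - lam) • E.comp T
  have ht : ‖-t‖ < 1 := by rwa [norm_neg, norm_smul]
  let e := ContinuousLinearEquiv.unitsEquiv ℂ Y (Units.oneSub (-t) ht)
  refine ⟨_, hT.comp_symm e fun x => ?_⟩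
  simp only [e, t, ContinuousLinearEquiv.unitsEquiv_apply, Units.val_oneSub, sub_neg_eq_add,
    add_apply, one_apply_eq_self, smul_apply, ContinuousLinearMap.comp_apply, hT.1 x]
  module

variable (E A) in
theorem isOpen_setOf_isRegularPoint : IsOpen {lam : ℂ | IsRegularPoint E A lam} := by
  refine Metric.isOpen_iff.mpr fun lam ⟨T, hT⟩ => ⟨(‖E.comp T‖ + 1)⁻¹, by positivity, ?_⟩
  intro μ hμ
  refine IsPencilInverse.isRegularPoint_of_norm_sub_mul_lt hT ?_
  rw [Metric.mem_ball, dist_eq_norm, ← one_div, lt_div_iff₀ (by positivity)] at hμ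
  nlinarith [norm_nonneg (μ - lam)]

theorem IsPencilInverse.exists_ne_zero_norm_le {lam lam0 : ℂ} {T : Y →L[ℂ] X}
    (hT : IsPencilInverse E A lam T) (hsing : ¬ IsRegularPoint E A lam0) :
    ∃ x : A.domain, (x : X) ≠ 0 ∧
      ‖lam0 • E (x : X) - A x‖ ≤ 3 * ‖lam0 - lam‖ * ‖E‖ * ‖(x : X)‖ := by
  set d := ‖lam0 - lam‖
  have hd : 1 ≤ d * ‖E.comp T‖ :=
    not_lt.mp fun h => hsing (hT.isRegularPoint_of_norm_sub_mul_lt h)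
  have hd0 : 0 < d := by
    by_contra! h
    nlinarith [norm_nonneg (E.comp T), norm_nonneg (lam0 - lam)]
  -- `1 / d ≤ ‖ET‖` need not be attained, so aim at half of it.
  have hnorm : (2 * d)⁻¹ < ‖E.comp T‖ := by
    rw [inv_lt_iff_one_lt_mul₀ (by positivity)]
    nlinarith
  obtain ⟨y, hy, hEy⟩ := (E.comp T).exists_lt_apply_of_lt_opNorm hnorm
  obtain ⟨x, hxT, hxy⟩ := hT.2 y
  rw [ContinuousLinearMap.comp_apply, ← hxT] at hEy
  have hEx : 1 < 2 * d * ‖E (x : X)‖ := by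
    rw [inv_lt_iff_one_lt_mul₀ (by positivity)] at hEy
    linarith
  refine ⟨x, fun hx0 => by norm_num [hx0] at hEx, ?_⟩
  have hshift : lam0 • E (x : X) - A x = y + (lam0 - lam) • E (x : X) := by
    rw [← hxy]; module
  calc ‖lam0 • E (x : X) - A x‖ ≤ ‖y‖ + d * ‖E (x : X)‖ := by
        rw [hshift, ← norm_smul]; exact norm_add_le _ _
    _ ≤ 3 * d * ‖E (x : X)‖ := by nlinarith
    _ ≤ 3 * d * (‖E‖ * ‖(x : X)‖) := by gcongr; exact E.le_opNorm _
    _ = 3 * d * ‖E‖ * ‖(x : X)‖ := by ring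

omit [CompleteSpace Y] in
theorem isApproxSingularity_of_forall_exists_norm_le {lam : ℂ}
    (h : ∀ ε > 0, ∃ x : A.domain, (x : X) ≠ 0 ∧ ‖lam • E (x : X) - A x‖ ≤ ε * ‖(x : X)‖) :
    IsApproxSingularity E A lam := by
  choose x hx0 hx using fun n : ℕ => h (1 / ((n : ℝ) + 1)) Nat.one_div_pos_of_nat
  refine ⟨fun n => ((‖(x n : X)‖ : ℂ)⁻¹) • x n, fun n => ?_, ?_⟩
  · simp [norm_smul, hx0 n]
  · refine squeeze_zero_norm (fun n => ?_) tendsto_one_div_add_atTop_nhds_zero_nat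
    have hpos : 0 < ‖(x n : X)‖ := norm_pos_iff.mpr (hx0 n)
    set c : ℂ := (‖(x n : X)‖ : ℂ)⁻¹
    have hscale : lam • E ((c • x n : A.domain) : X) - A (c • x n)
        = c • (lam • E (x n : X) - A (x n)) := by
      rw [Submodule.coe_smul, A.map_smul, map_smul]; module
    rw [hscale, norm_smul, norm_inv, Complex.norm_real, Real.norm_of_nonneg hpos.le,
      inv_mul_le_iff₀ hpos, mul_comm]
    exact hx n

end Pencil

theorem stmt_1_general (E : X →L[ℂ] Y) (A : X →ₗ.[ℂ] Y) :
    ∀ lam0 ∈ frontier {lam : ℂ | ¬ IsRegularPoint E A lam},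
      IsApproxSingularity E A lam0 := by
  intro lam0 hfr
  have hsing : ¬ IsRegularPoint E A lam0 :=
    (isOpen_setOf_isRegularPoint E A).isClosed_compl.frontier_subset hfr
  have hcl : lam0 ∈ closure {lam : ℂ | IsRegularPoint E A lam} := by
    rw [← Set.compl_ofPred, frontier_compl] at hfr
    exact frontier_subset_closure hfr
  refine isApproxSingularity_of_forall_exists_norm_le fun ε hε => ?_
  have hnear : ∀ᶠ lam in 𝓝 lam0, 3 * ‖lam0 - lam‖ * ‖E‖ ≤ ε := by
    have hcont : Continuous fun lam : ℂ => 3 * ‖lam0 - lam‖ * ‖E‖ := by fun_prop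
    have hlim : Tendsto (fun lam => 3 * ‖lam0 - lam‖ * ‖E‖) (𝓝 lam0) (𝓝 0) := by
      simpa using hcont.tendsto lam0
    exact hlim.eventually (ge_mem_nhds hε)
  obtain ⟨lam, hreg, hlam⟩ := ((mem_closure_iff_frequently.mp hcl).and_eventually hnear).exists
  obtain ⟨T, hT⟩ := isRegularPoint_iff_exists_isPencilInverse.mp hreg
  obtain ⟨x, hx0, hx⟩ := hT.exists_ne_zero_norm_le hsing
  exact ⟨x, hx0, hx.trans (by gcongr)⟩

/-- If the set of regular points of the pencil `λE - A` is nonempty, then every point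
of the topological boundary of the set of singular points is an approximate
singularity. -/
theorem stmt_1 (E : X →L[ℂ] Y) (A : X →ₗ.[ℂ] Y)
    (hdense : Dense (A.domain : Set X)) (hclosed : IsClosed (A.graph : Set (X × Y)))
    (hρ : ∃ lam : ℂ, IsRegularPoint E A lam) :
    ∀ lam0 ∈ frontier {lam : ℂ | ¬ IsRegularPoint E A lam},
      IsApproxSingularity E A lam0 :=
  stmt_1_general E A
end
end

section
/- If the operator pencil λE − A has a right singular polynomial, then it has a right singular polynomial p0 such that both p0 and its reversal rev p0 have no roots in ℂ (i.e., p0(λ0) ≠ 0 and rev p0(λ0) ≠ 0 for every λ0 ∈ ℂ); moreover, rev p0 is a right singular polynomial for the reversal pencil λA − E, i.e., rev p0(λ0) ∈ D(E) ∩ D(A) and (λ0 A − E) rev p0(λ0) = 0 for every λ0 ∈ ℂ. -/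
open Filter Topology

noncomputable section

variable {X Y : Type*}
  [NormedAddCommGroup X] [InnerProductSpace ℂ X] [CompleteSpace X]
  [NormedAddCommGroup Y] [InnerProductSpace ℂ Y] [CompleteSpace Y]

/-- Evaluation of the `X`-valued polynomial `p(λ) = ∑_{j=0}^k λ^j a_j` at `lam`. -/
def polyEval {Z : Type*} [AddCommGroup Z] [Module ℂ Z] (a : ℕ → Z) (k : ℕ) (lam : ℂ) : Z :=
  ∑ j ∈ Finset.range (k + 1), lam ^ j • a j

/-- Evaluation of the reversal `rev p(λ) = ∑_{j=0}^k λ^j a_{k-j}` at `lam`. -/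
def revEval {Z : Type*} [AddCommGroup Z] [Module ℂ Z] (a : ℕ → Z) (k : ℕ) (lam : ℂ) : Z :=
  ∑ j ∈ Finset.range (k + 1), lam ^ j • a (k - j)

/-- Application of a partially defined operator, extended by `0` outside its domain. -/
noncomputable def pap {W Z : Type*} [NormedAddCommGroup W] [InnerProductSpace ℂ W]
    [NormedAddCommGroup Z] [InnerProductSpace ℂ Z] (A : W →ₗ.[ℂ] Z) (v : W) : Z :=
  haveI := Classical.dec (v ∈ A.domain)
  if h : v ∈ A.domain then A ⟨v, h⟩ else 0

/-- `p(λ) = ∑_{j=0}^k λ^j a_j` is a right singular polynomial for the pencil `λE - A`: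
it is a nonzero polynomial, `p(λ0) ∈ D(E) ∩ D(A)` and `(λ0 E - A) p(λ0) = 0` for all
`λ0 ∈ ℂ`. -/
def IsRightSingularPoly (E A : X →ₗ.[ℂ] Y) (k : ℕ) (a : ℕ → X) : Prop :=
  (∃ j ≤ k, a j ≠ 0) ∧
  ∀ lam : ℂ, polyEval a k lam ∈ E.domain ∧ polyEval a k lam ∈ A.domain ∧
    lam • pap E (polyEval a k lam) - pap A (polyEval a k lam) = 0

/-! A right singular polynomial `p` of minimal degree `k` works. Its leading coefficient is
nonzero, as otherwise the degree could be lowered, and it has no roots, as a root `μ` could be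
divided out: `p(λ) / (λ - μ)` is singular for `λ ≠ μ`, hence for all `λ`, because a polynomial
identity holding on an infinite set holds identically. Hence `rev p(λ) = λ^k p(1/λ)` has no roots
either (`rev p(0)` is the leading coefficient), and the same continuation from `λ ≠ 0` shows that
`rev p` is singular for `λA - E`. -/

section PolyEval

variable {Z W : Type*} [AddCommGroup Z] [Module ℂ Z] [AddCommGroup W] [Module ℂ W]

lemma polyEval_congr {c d : ℕ → Z} {k : ℕ} (h : ∀ j ≤ k, c j = d j) (lam : ℂ) :
    polyEval c k lam = polyEval d k lam :=
  Finset.sum_congr rfl fun j hj => by rw [h j (Finset.mem_range_succ_iff.mp hj)]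

lemma polyEval_eq_zero {c : ℕ → Z} {k : ℕ} (h : ∀ j ≤ k, c j = 0) (lam : ℂ) :
    polyEval c k lam = 0 := by
  rw [polyEval_congr h]
  simp [polyEval]

lemma map_polyEval (f : Z →ₗ[ℂ] W) (a : ℕ → Z) (k : ℕ) (lam : ℂ) :
    f (polyEval a k lam) = polyEval (fun j => f (a j)) k lam := by
  simp [polyEval, map_sum, map_smul]

lemma polyEval_sub (u v : ℕ → Z) (k : ℕ) (lam : ℂ) :
    polyEval (fun j => u j - v j) k lam = polyEval u k lam - polyEval v k lam := by
  simp [polyEval, Finset.sum_sub_distrib, smul_sub]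

lemma polyEval_succ (u : ℕ → Z) (k : ℕ) (lam : ℂ) :
    polyEval u (k + 1) lam = polyEval u k lam + lam ^ (k + 1) • u (k + 1) :=
  Finset.sum_range_succ _ _

lemma polyEval_at_zero (u : ℕ → Z) (k : ℕ) : polyEval u k 0 = u 0 := by
  rw [polyEval, Finset.sum_eq_single 0 (fun j _ hj => by rw [zero_pow hj, zero_smul])
    (by simp)]
  simp

/-- Tested against a linear functional, this is the scalar fact that a nonzero polynomial has
finitely many roots. -/
lemma coeff_eq_zero_of_infinite {c : ℕ → Z} {k : ℕ} {S : Set ℂ} (hS : S.Infinite)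
    (h : ∀ lam ∈ S, polyEval c k lam = 0) : ∀ j ≤ k, c j = 0 := by
  intro j hj
  rw [← Module.forall_dual_apply_eq_zero_iff ℂ (c j)]
  intro f
  set P : Polynomial ℂ := ∑ i ∈ Finset.range (k + 1), Polynomial.monomial i (f (c i))
  have hP : P = 0 := by
    refine Polynomial.eq_zero_of_infinite_isRoot P (hS.mono fun lam hlam => ?_)
    have := congrArg f (h lam hlam)
    rw [map_polyEval] at this
    simpa [P, Polynomial.eval_finsetSum, polyEval, mul_comm] using this
  simpa [P, Polynomial.coeff_monomial, Finset.sum_ite_eq', Nat.lt_succ_iff, hj] using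
    congrArg (Polynomial.coeff · j) hP

lemma forall_polyEval_mem_iff (D : Submodule ℂ Z) (a : ℕ → Z) (k : ℕ) :
    (∀ lam : ℂ, polyEval a k lam ∈ D) ↔ ∀ j ≤ k, a j ∈ D := by
  refine ⟨fun h j hj => ?_, fun h lam => ?_⟩
  · rw [← Submodule.Quotient.mk_eq_zero D]
    refine coeff_eq_zero_of_infinite (c := fun i => D.mkQ (a i)) Set.infinite_univ
      (fun lam _ => ?_) j hj
    rw [← map_polyEval, Submodule.mkQ_apply, Submodule.Quotient.mk_eq_zero]
    exact h lam
  · exact D.sum_mem fun j hj => D.smul_mem _ (h j (Finset.mem_range_succ_iff.mp hj))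

lemma smul_polyEval_sub_polyEval (u v : ℕ → Z) (k : ℕ) (lam : ℂ) :
    lam • polyEval u k lam - polyEval v k lam
      = polyEval (fun j => (if j = 0 then 0 else u (j - 1)) - if j = k + 1 then 0 else v j)
          (k + 1) lam := by
  rw [polyEval_sub]
  simp only [polyEval]
  rw [Finset.sum_range_succ' _ (k + 1), Finset.sum_range_succ _ (k + 1), Finset.smul_sum]
  simp only [Nat.succ_ne_zero, if_false, if_true, Nat.add_sub_cancel, smul_zero, add_zero]
  congr 1
  · exact Finset.sum_congr rfl fun j _ => by rw [smul_smul, pow_succ, mul_comm]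
  · exact Finset.sum_congr rfl fun j hj => by
      rw [if_neg (by have := Finset.mem_range.mp hj; omega)]

lemma revEval_eq_polyEval (a : ℕ → Z) (k : ℕ) :
    revEval a k = polyEval (fun j => a (k - j)) k :=
  rfl

lemma revEval_eq_smul_polyEval_inv (a : ℕ → Z) (k : ℕ) {lam : ℂ} (hlam : lam ≠ 0) :
    revEval a k lam = lam ^ k • polyEval a k lam⁻¹ := by
  rw [revEval, ← Finset.sum_range_reflect, polyEval, Finset.smul_sum]
  refine Finset.sum_congr rfl fun j hj => ?_
  have hj : j ≤ k := Finset.mem_range_succ_iff.mp hj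
  rw [smul_smul, inv_pow, ← pow_sub₀ lam hlam hj, Nat.add_sub_cancel, Nat.sub_sub_self hj]

lemma revEval_ne_zero {a : ℕ → Z} {k : ℕ} (hk : a k ≠ 0) (hroot : ∀ μ, polyEval a k μ ≠ 0)
    (lam : ℂ) : revEval a k lam ≠ 0 := by
  rcases eq_or_ne lam 0 with rfl | hlam
  · simpa [revEval_eq_polyEval, polyEval_at_zero] using hk
  · rw [revEval_eq_smul_polyEval_inv a k hlam]
    exact smul_ne_zero (pow_ne_zero k hlam) (hroot _)

/-- Synthetic division: the coefficients of `(p(λ) - p(μ)) / (λ - μ)` for `p` of degree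
`m + 1`. -/
def rootQuotient (a : ℕ → Z) (m : ℕ) (μ : ℂ) (j : ℕ) : Z :=
  ∑ i ∈ Finset.range (m + 1 - j), μ ^ i • a (j + 1 + i)

lemma polyEval_sub_polyEval_eq_smul_rootQuotient (a : ℕ → Z) (m : ℕ) (μ lam : ℂ) :
    polyEval a (m + 1) lam - polyEval a (m + 1) μ
      = (lam - μ) • polyEval (rootQuotient a m μ) m lam := by
  have hgeom : ∀ j, lam ^ j • a j - μ ^ j • a j
      = (lam - μ) • ∑ t ∈ Finset.range j, (lam ^ t * μ ^ (j - 1 - t)) • a j := fun j => by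
    rw [← sub_smul, ← geom_sum₂_mul, mul_comm, mul_smul, Finset.sum_smul]
  simp only [polyEval, rootQuotient, ← Finset.sum_sub_distrib, hgeom, ← Finset.smul_sum]
  congr 1
  rw [Finset.sum_comm' (t' := Finset.range (m + 1)) (s' := fun t => Finset.Ico (t + 1) (m + 2))
    (fun j t => by simp only [Finset.mem_range, Finset.mem_Ico]; omega)]
  refine Finset.sum_congr rfl fun t ht => ?_
  rw [Finset.sum_Ico_eq_sum_range, Finset.smul_sum]
  refine Finset.sum_congr (by congr 1; omega) fun i _ => ?_
  rw [smul_smul, show t + 1 + i - 1 - t = i by omega]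

lemma rootQuotient_mem (D : Submodule ℂ Z) {a : ℕ → Z} {m : ℕ} (h : ∀ j ≤ m + 1, a j ∈ D)
    (μ : ℂ) : ∀ j ≤ m, rootQuotient a m μ j ∈ D := fun j _ =>
  D.sum_mem fun i hi => D.smul_mem _ (h _ (by have := Finset.mem_range.mp hi; omega))

end PolyEval

section PartialApplication

variable {W V : Type*} [NormedAddCommGroup W] [InnerProductSpace ℂ W]
  [NormedAddCommGroup V] [InnerProductSpace ℂ V]

lemma pap_coe (T : W →ₗ.[ℂ] V) (x : T.domain) : pap T x = T x :=
  dif_pos x.2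

lemma pap_smul (T : W →ₗ.[ℂ] V) {x : W} (hx : x ∈ T.domain) (c : ℂ) :
    pap T (c • x) = c • pap T x := by
  have := pap_coe T (c • ⟨x, hx⟩)
  rwa [Submodule.coe_smul, T.map_smul, ← pap_coe] at this

lemma pap_polyEval (T : W →ₗ.[ℂ] V) {c : ℕ → W} {k : ℕ} (h : ∀ j ≤ k, c j ∈ T.domain)
    (lam : ℂ) : pap T (polyEval c k lam) = polyEval (fun j => pap T (c j)) k lam := by
  classical
  let c' : ℕ → T.domain := fun j => if hj : j ≤ k then ⟨c j, h j hj⟩ else 0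
  have hc' : ∀ j ≤ k, (c' j : W) = c j := fun j hj => by simp [c', hj]
  calc pap T (polyEval c k lam)
      = pap T (T.domain.subtype (polyEval c' k lam)) := by
        rw [map_polyEval, Submodule.coe_subtype, polyEval_congr hc']
    _ = polyEval (fun j => T (c' j)) k lam := by
        rw [Submodule.subtype_apply, pap_coe, ← T.toFun_eq_coe, map_polyEval]
        rfl
    _ = polyEval (fun j => pap T (c j)) k lam :=
        polyEval_congr (fun j hj => by rw [← hc' j hj, pap_coe]) lam

lemma pencil_eq_zero_of_infinite (T S : W →ₗ.[ℂ] V) {c : ℕ → W} {k : ℕ}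
    (hT : ∀ j ≤ k, c j ∈ T.domain) (hS : ∀ j ≤ k, c j ∈ S.domain) {Λ : Set ℂ}
    (hΛ : Λ.Infinite)
    (h : ∀ lam ∈ Λ, lam • pap T (polyEval c k lam) - pap S (polyEval c k lam) = 0) (lam : ℂ) :
    lam • pap T (polyEval c k lam) - pap S (polyEval c k lam) = 0 := by
  simp only [pap_polyEval _ hT, pap_polyEval _ hS, smul_polyEval_sub_polyEval] at h ⊢
  exact polyEval_eq_zero (coeff_eq_zero_of_infinite hΛ h) lam

end PartialApplication

namespace IsRightSingularPoly

variable {U V : Type*} [NormedAddCommGroup U] [InnerProductSpace ℂ U]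
  [NormedAddCommGroup V] [InnerProductSpace ℂ V] {E A : U →ₗ.[ℂ] V} {k : ℕ} {a : ℕ → U}

lemma coeff_mem_domain_left (ha : IsRightSingularPoly E A k a) : ∀ j ≤ k, a j ∈ E.domain :=
  (forall_polyEval_mem_iff _ _ _).1 fun lam => (ha.2 lam).1

lemma coeff_mem_domain_right (ha : IsRightSingularPoly E A k a) : ∀ j ≤ k, a j ∈ A.domain :=
  (forall_polyEval_mem_iff _ _ _).1 fun lam => (ha.2 lam).2.1

lemma of_infinite (hnz : ∃ j ≤ k, a j ≠ 0) (hE : ∀ j ≤ k, a j ∈ E.domain)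
    (hA : ∀ j ≤ k, a j ∈ A.domain) {Λ : Set ℂ} (hΛ : Λ.Infinite)
    (h : ∀ lam ∈ Λ, lam • pap E (polyEval a k lam) - pap A (polyEval a k lam) = 0) :
    IsRightSingularPoly E A k a :=
  ⟨hnz, fun lam => ⟨(forall_polyEval_mem_iff _ _ _).2 hE lam,
    (forall_polyEval_mem_iff _ _ _).2 hA lam, pencil_eq_zero_of_infinite E A hE hA hΛ h lam⟩⟩

lemma of_coeff_succ_eq_zero (ha : IsRightSingularPoly E A (k + 1) a) (h0 : a (k + 1) = 0) :
    IsRightSingularPoly E A k a := by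
  obtain ⟨⟨j, hj, hja⟩, hsing⟩ := ha
  have hjk : j ≠ k + 1 := by rintro rfl; exact hja h0
  refine ⟨⟨j, by omega, hja⟩, fun lam => ?_⟩
  simpa [polyEval_succ, h0] using hsing lam

lemma rootQuotient_of_root (ha : IsRightSingularPoly E A (k + 1) a) {μ : ℂ}
    (hμ : polyEval a (k + 1) μ = 0) : IsRightSingularPoly E A k (rootQuotient a k μ) := by
  have hfac : ∀ lam, polyEval a (k + 1) lam = (lam - μ) • polyEval (rootQuotient a k μ) k lam :=
    fun lam => by rw [← polyEval_sub_polyEval_eq_smul_rootQuotient, hμ, sub_zero]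
  refine of_infinite ?_ (rootQuotient_mem _ ha.coeff_mem_domain_left μ)
    (rootQuotient_mem _ ha.coeff_mem_domain_right μ) (Set.finite_singleton μ).infinite_compl
    fun lam hlam => ?_
  · by_contra! hzero
    obtain ⟨j, hj, hja⟩ := ha.1
    refine hja (coeff_eq_zero_of_infinite Set.infinite_univ (fun lam _ => ?_) j hj)
    rw [hfac, polyEval_eq_zero hzero, smul_zero]
  · have hne : lam - μ ≠ 0 := sub_ne_zero.mpr hlam
    obtain ⟨hE, hA, hpencil⟩ := ha.2 lam
    rw [← inv_smul_smul₀ hne (polyEval (rootQuotient a k μ) k lam), ← hfac, pap_smul E hE,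
      pap_smul A hA, smul_comm lam, ← smul_sub, hpencil, smul_zero]

lemma reverse (ha : IsRightSingularPoly E A k a) :
    IsRightSingularPoly A E k (fun j => a (k - j)) := by
  obtain ⟨j, hj, hja⟩ := ha.1
  refine of_infinite ⟨k - j, Nat.sub_le k j, by rwa [Nat.sub_sub_self hj]⟩
    (fun j _ => ha.coeff_mem_domain_right _ (Nat.sub_le k j))
    (fun j _ => ha.coeff_mem_domain_left _ (Nat.sub_le k j))
    (Set.finite_singleton 0).infinite_compl fun lam hlam => ?_
  have hlam : lam ≠ 0 := hlam
  obtain ⟨hE, hA, hpencil⟩ := ha.2 lam⁻¹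
  rw [sub_eq_zero] at hpencil
  rw [← revEval_eq_polyEval, revEval_eq_smul_polyEval_inv a k hlam, pap_smul A hA,
    pap_smul E hE, ← hpencil, smul_smul, smul_smul, mul_right_comm, mul_inv_cancel₀ hlam,
    one_mul, sub_self]

lemma coeff_ne_zero_of_minimal (ha : IsRightSingularPoly E A k a)
    (hmin : ∀ m < k, ∀ b, ¬IsRightSingularPoly E A m b) : a k ≠ 0 := by
  intro h0
  cases k with
  | zero =>
    obtain ⟨j, hj, hja⟩ := ha.1
    rw [Nat.le_zero.mp hj] at hja
    exact hja h0
  | succ m => exact hmin m m.lt_succ_self a (ha.of_coeff_succ_eq_zero h0)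

lemma polyEval_ne_zero_of_minimal (ha : IsRightSingularPoly E A k a)
    (hmin : ∀ m < k, ∀ b, ¬IsRightSingularPoly E A m b) (μ : ℂ) : polyEval a k μ ≠ 0 := by
  intro hμ
  cases k with
  | zero => exact ha.coeff_ne_zero_of_minimal hmin (by simpa [polyEval] using hμ)
  | succ m => exact hmin m m.lt_succ_self _ (ha.rootQuotient_of_root hμ)

end IsRightSingularPoly

/-- If the pencil `λE - A` has a right singular polynomial, then it has one, `p₀`, such
that both `p₀` and its reversal have no roots in `ℂ`, and moreover the reversal of `p₀`
is a right singular polynomial for the reversal pencil `λA - E`. -/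
theorem stmt_3 (E A : X →ₗ.[ℂ] Y)
    (h : ∃ (k : ℕ) (a : ℕ → X), IsRightSingularPoly E A k a) :
    ∃ (k : ℕ) (a : ℕ → X),
      IsRightSingularPoly E A k a ∧
      (∀ lam : ℂ, polyEval a k lam ≠ 0) ∧
      (∀ lam : ℂ, revEval a k lam ≠ 0) ∧
      (∀ lam : ℂ, revEval a k lam ∈ E.domain ∧ revEval a k lam ∈ A.domain ∧
        lam • pap A (revEval a k lam) - pap E (revEval a k lam) = 0) := by
  classical
  obtain ⟨a, ha⟩ := Nat.find_spec h
  have hmin : ∀ m < Nat.find h, ∀ b, ¬IsRightSingularPoly E A m b :=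
    fun m hm b hb => Nat.find_min h hm ⟨b, hb⟩
  have hroot := ha.polyEval_ne_zero_of_minimal hmin
  refine ⟨Nat.find h, a, ha, hroot, revEval_ne_zero (ha.coeff_ne_zero_of_minimal hmin) hroot,
    fun lam => ?_⟩
  obtain ⟨hA, hE, hpencil⟩ := ha.reverse.2 lam
  exact ⟨hE, hA, hpencil⟩
end
end

section
/- Suppose the operator pencil P(λ) = λE − A has a right singular function, i.e., there are a closed discrete set D0 ⊆ ℂ, a holomorphic function x : ℂ ∖ D0 → X, and a closed discrete set D1 ⊇ D0 such that for every λ0 ∈ ℂ ∖ D1 one has x(λ0) ∈ D(A), x(λ0) ≠ 0 and (λ0E − A)x(λ0) = 0. Then every λ0 ∈ ℂ ∖ D1 is a point singularity of P, and the set of approximate singularities of P equals all of ℂ. -/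
/-! Every `λ ∉ D1` is an eigenvalue of the pencil with eigenvector `x(λ)`. Since `D1` has no
accumulation points, its complement is dense, so every `λ0` is a limit of eigenvalues `μₙ`; for
unit eigenvectors `uₙ` at `μₙ` one has `(λ0 E - A) uₙ = (λ0 - μₙ) E uₙ → 0`. -/

open Filter Topology

noncomputable section

variable {X Y : Type*}
  [NormedAddCommGroup X] [InnerProductSpace ℂ X] [CompleteSpace X]
  [NormedAddCommGroup Y] [InnerProductSpace ℂ Y] [CompleteSpace Y]

theorem mem_closure_compl_of_not_accPt {α : Type*} [TopologicalSpace α] {s : Set α} {z : α}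
    [(𝓝[≠] z).NeBot] (h : ¬AccPt z (𝓟 s)) : z ∈ closure sᶜ := by
  rw [closure_compl, Set.mem_compl_iff, mem_interior_iff_mem_nhds]
  intro hs
  have : ∀ᶠ y in 𝓝[≠] z, y ∈ s := mem_nhdsWithin_of_mem_nhds hs
  exact h (accPt_iff_frequently_nhdsNE.2 this.frequently)

section Pencil

variable {V W : Type*} [NormedAddCommGroup V] [InnerProductSpace ℂ V]
  [NormedAddCommGroup W] [InnerProductSpace ℂ W] (E : V →L[ℂ] W) (A : V →ₗ.[ℂ] W)

def IsPointSingularity (lam : ℂ) : Prop :=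
  ∃ v : A.domain, (v : V) ≠ 0 ∧ lam • E (v : V) - A v = 0

variable {E A}

theorem isPointSingularity_of_pap {lam : ℂ} {v : V} (hv : v ∈ A.domain) (hv0 : v ≠ 0)
    (h : lam • E v - pap A v = 0) : IsPointSingularity E A lam := by
  rw [pap, dif_pos hv] at h
  exact ⟨⟨v, hv⟩, hv0, h⟩

theorem IsPointSingularity.exists_norm_eq_one {lam : ℂ} (h : IsPointSingularity E A lam) :
    ∃ u : A.domain, ‖(u : V)‖ = 1 ∧ lam • E (u : V) - A u = 0 := by
  obtain ⟨v, hv0, hv⟩ := h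
  refine ⟨((‖(v : V)‖⁻¹ : ℝ) : ℂ) • v, ?_, ?_⟩
  · rw [Submodule.coe_smul, norm_smul, Complex.norm_real, norm_inv, norm_norm,
      inv_mul_cancel₀ (norm_ne_zero_iff.2 hv0)]
  · rw [A.map_smul, Submodule.coe_smul, map_smul, smul_comm, ← smul_sub, hv, smul_zero]

theorem isApproxSingularity_of_tendsto {lam : ℂ} {μ : ℕ → ℂ}
    (hμ : Tendsto μ atTop (𝓝 lam)) (h : ∀ n, IsPointSingularity E A (μ n)) :
    IsApproxSingularity E A lam := by
  choose u hu_norm hu using fun n => (h n).exists_norm_eq_one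
  refine ⟨u, hu_norm, squeeze_zero_norm (a := fun n => ‖lam - μ n‖ * ‖E‖) (fun n => ?_) ?_⟩
  · have hA : A (u n) = μ n • E (u n : V) := (sub_eq_zero.1 (hu n)).symm
    calc ‖lam • E (u n : V) - A (u n)‖ = ‖(lam - μ n) • E (u n : V)‖ := by rw [hA, sub_smul]
      _ ≤ ‖lam - μ n‖ * (‖E‖ * ‖(u n : V)‖) := by
          rw [norm_smul]; gcongr; exact E.le_opNorm _
      _ = ‖lam - μ n‖ * ‖E‖ := by rw [hu_norm, mul_one]
  · simpa using ((tendsto_const_nhds (x := lam)).sub hμ).norm.mul_const ‖E‖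

end Pencil

theorem stmt_6_general (E : X →L[ℂ] Y) (A : X →ₗ.[ℂ] Y)
    (D1 : Set ℂ)
    (hD1disc : ∀ z : ℂ, ¬ AccPt z (Filter.principal D1))
    (x : ℂ → X)
    (hx : ∀ lam ∉ D1, x lam ∈ A.domain ∧ x lam ≠ 0 ∧
      lam • E (x lam) - pap A (x lam) = 0) :
    (∀ lam0 ∉ D1, ∃ v : A.domain, (v : X) ≠ 0 ∧ lam0 • E (v : X) - A v = 0) ∧
    (∀ lam0 : ℂ, IsApproxSingularity E A lam0) := by
  have hpoint : ∀ lam ∉ D1, IsPointSingularity E A lam := fun lam hlam =>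
    isPointSingularity_of_pap (hx lam hlam).1 (hx lam hlam).2.1 (hx lam hlam).2.2
  refine ⟨hpoint, fun lam0 => ?_⟩
  obtain ⟨μ, hμD1, hμ⟩ :=
    mem_closure_iff_seq_limit.1 (mem_closure_compl_of_not_accPt (hD1disc lam0))
  exact isApproxSingularity_of_tendsto hμ fun n => hpoint (μ n) (hμD1 n)

/-- If the pencil `λE - A` has a right singular function `x`, holomorphic off a closed
discrete set `D0` and satisfying `x(λ0) ∈ D(A)`, `x(λ0) ≠ 0`, `(λ0 E - A) x(λ0) = 0`
off a closed discrete set `D1 ⊇ D0`, then every `λ0 ∉ D1` is a point singularity of the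
pencil and the set of approximate singularities is all of `ℂ`. -/
theorem stmt_6 (E : X →L[ℂ] Y) (A : X →ₗ.[ℂ] Y)
    (hdense : Dense (A.domain : Set X)) (hclosed : IsClosed (A.graph : Set (X × Y)))
    (D0 D1 : Set ℂ)
    (hD0closed : IsClosed D0) (hD0disc : ∀ z : ℂ, ¬ AccPt z (Filter.principal D0))
    (hD1closed : IsClosed D1) (hD1disc : ∀ z : ℂ, ¬ AccPt z (Filter.principal D1))
    (hsub : D0 ⊆ D1)
    (x : ℂ → X) (hxhol : DifferentiableOn ℂ x D0ᶜ)
    (hx : ∀ lam ∉ D1, x lam ∈ A.domain ∧ x lam ≠ 0 ∧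
      lam • E (x lam) - pap A (x lam) = 0) :
    (∀ lam0 ∉ D1, ∃ v : A.domain, (v : X) ≠ 0 ∧ lam0 • E (v : X) - A v = 0) ∧
    (∀ lam0 : ℂ, IsApproxSingularity E A lam0) :=
  stmt_6_general E A D1 hD1disc x hx
end
end

section
/- Let P(λ) = λE − A be an operator pencil. (i) If P has a right approximate polynomial sequence, then there exist unit vectors x_n ∈ D(A) with A x_n → 0 and unit vectors y_n ∈ D(E) with E y_n → 0 as n → ∞. (ii) Conversely, if there exist unit vectors x_n ∈ D(E) ∩ D(A) with A x_n → 0 and E x_n → 0, then P has a right approximate polynomial sequence. -/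
/-!
At `λ0 = 0` a right approximate polynomial sequence gives `A p_n(0) → 0` and
`E rev p_n(0) → 0`, with norms not tending to `0`; along a subsequence on which these norms
are bounded below, normalising yields the unit vectors of (i). For (ii), the constant
polynomials `p_n = x_n` of degree `0` are their own reversals, and
`(λ0 E - A) x_n = λ0 E x_n - A x_n → 0` for every `λ0`.
-/

open Filter Topology

noncomputable section

variable {X Y : Type*}
  [NormedAddCommGroup X] [InnerProductSpace ℂ X] [CompleteSpace X]
  [NormedAddCommGroup Y] [InnerProductSpace ℂ Y] [CompleteSpace Y]

/-- The polynomials `p_n(λ) = ∑_{j=0}^{k n} λ^j (a n j)` form a right approximate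
polynomial sequence for the pencil `λE - A`: all values of `p_n` and of the reversals
`rev p_n` lie in `D(E) ∩ D(A)`, and for every `λ0 ∈ ℂ`: `p_n(λ0) ≠ 0`,
`rev p_n(λ0) ≠ 0`, neither `‖p_n(λ0)‖` nor `‖rev p_n(λ0)‖` converges to `0`, while
`(λ0 E - A) p_n(λ0) → 0` and `(λ0 A - E) rev p_n(λ0) → 0`. -/
def IsRAPS (E A : X →ₗ.[ℂ] Y) (k : ℕ → ℕ) (a : ℕ → ℕ → X) : Prop :=
  (∀ (n : ℕ) (lam : ℂ),
      polyEval (a n) (k n) lam ∈ E.domain ∧ polyEval (a n) (k n) lam ∈ A.domain ∧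
      revEval (a n) (k n) lam ∈ E.domain ∧ revEval (a n) (k n) lam ∈ A.domain) ∧
  ∀ lam : ℂ,
    (∀ n, polyEval (a n) (k n) lam ≠ 0) ∧
    (∀ n, revEval (a n) (k n) lam ≠ 0) ∧
    ¬ Tendsto (fun n => ‖polyEval (a n) (k n) lam‖) atTop (𝓝 (0 : ℝ)) ∧
    ¬ Tendsto (fun n => ‖revEval (a n) (k n) lam‖) atTop (𝓝 (0 : ℝ)) ∧
    Tendsto (fun n => lam • pap E (polyEval (a n) (k n) lam) -
      pap A (polyEval (a n) (k n) lam)) atTop (𝓝 (0 : Y)) ∧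
    Tendsto (fun n => lam • pap A (revEval (a n) (k n) lam) -
      pap E (revEval (a n) (k n) lam)) atTop (𝓝 (0 : Y))

@[simp]
lemma polyEval_zero {Z : Type*} [AddCommGroup Z] [Module ℂ Z] (a : ℕ → Z) (lam : ℂ) :
    polyEval a 0 lam = a 0 := by
  simp [polyEval]

@[simp]
lemma revEval_zero {Z : Type*} [AddCommGroup Z] [Module ℂ Z] (a : ℕ → Z) (lam : ℂ) :
    revEval a 0 lam = a 0 := by
  simp [revEval]

lemma exists_pos_frequently_le_norm_of_not_tendsto {V : Type*} [SeminormedAddCommGroup V]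
    {p : ℕ → V} (hp : ¬ Tendsto (fun n => ‖p n‖) atTop (𝓝 0)) :
    ∃ ε > 0, ∃ᶠ n in atTop, ε ≤ ‖p n‖ := by
  rw [← tendsto_zero_iff_norm_tendsto_zero, Metric.nhds_basis_ball.tendsto_right_iff] at hp
  push Not at hp
  simpa only [not_eventually, mem_ball_zero_iff, not_lt] using hp

section

variable {W Z : Type*} [NormedAddCommGroup W] [InnerProductSpace ℂ W]
  [NormedAddCommGroup Z] [InnerProductSpace ℂ Z]

lemma pap_of_mem (B : W →ₗ.[ℂ] Z) {v : W} (h : v ∈ B.domain) :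
    pap B v = B ⟨v, h⟩ :=
  dif_pos h

lemma pap_smul_s7 (B : W →ₗ.[ℂ] Z) (c : ℂ) {v : W} (h : v ∈ B.domain) :
    pap B (c • v) = c • pap B v := by
  rw [pap_of_mem B h, pap_of_mem B (B.domain.smul_mem c h)]
  exact B.map_smul c ⟨v, h⟩

lemma exists_unit_seq_tendsto_zero (B : W →ₗ.[ℂ] Z) {p : ℕ → W}
    (hdom : ∀ n, p n ∈ B.domain) (hp : ¬ Tendsto (fun n => ‖p n‖) atTop (𝓝 0))
    (hB : Tendsto (fun n => pap B (p n)) atTop (𝓝 0)) :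
    ∃ x : ℕ → W, (∀ n, x n ∈ B.domain) ∧ (∀ n, ‖x n‖ = 1) ∧
      Tendsto (fun n => pap B (x n)) atTop (𝓝 0) := by
  obtain ⟨ε, hε, hfreq⟩ := exists_pos_frequently_le_norm_of_not_tendsto hp
  obtain ⟨φ, hφ, hφε⟩ := extraction_of_frequently_atTop hfreq
  have hne : ∀ n, p (φ n) ≠ 0 := fun n => norm_pos_iff.mp (hε.trans_le (hφε n))
  refine ⟨fun n => (‖p (φ n)‖⁻¹ : ℂ) • p (φ n), fun n => B.domain.smul_mem _ (hdom _),
    fun n => norm_smul_inv_norm (hne n), ?_⟩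
  have hbound : Tendsto (fun n => ε⁻¹ * ‖pap B (p (φ n))‖) atTop (𝓝 0) := by
    simpa using ((hB.comp hφ.tendsto_atTop).norm).const_mul ε⁻¹
  refine squeeze_zero_norm (fun n => ?_) hbound
  rw [pap_smul_s7 B _ (hdom _), norm_smul, norm_inv, Complex.norm_real, norm_norm]
  gcongr
  exact hφε n

lemma isRAPS_const (E A : W →ₗ.[ℂ] Z) {x : ℕ → W}
    (hdom : ∀ n, x n ∈ E.domain ∧ x n ∈ A.domain) (hnorm : ∀ n, ‖x n‖ = 1)
    (hA : Tendsto (fun n => pap A (x n)) atTop (𝓝 0))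
    (hE : Tendsto (fun n => pap E (x n)) atTop (𝓝 0)) :
    IsRAPS E A (fun _ => 0) (fun n _ => x n) := by
  have hne : ∀ n, x n ≠ 0 := fun n => norm_ne_zero_iff.mp (by simp [hnorm n])
  have hnt : ¬ Tendsto (fun n => ‖x n‖) atTop (𝓝 0) := by simp [hnorm]
  refine ⟨fun n _ => ?_, fun lam => ?_⟩ <;> simp only [polyEval_zero, revEval_zero]
  · exact ⟨(hdom n).1, (hdom n).2, (hdom n).1, (hdom n).2⟩
  · exact ⟨hne, hne, hnt, hnt, by simpa using (hE.const_smul lam).sub hA,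
      by simpa using (hA.const_smul lam).sub hE⟩

end

/-- (i) If the pencil `λE - A` has a right approximate polynomial sequence, then there
are unit vectors `xₙ ∈ D(A)` with `A xₙ → 0` and unit vectors `yₙ ∈ D(E)` with
`E yₙ → 0`. (ii) Conversely, if there are unit vectors `xₙ ∈ D(E) ∩ D(A)` with
`A xₙ → 0` and `E xₙ → 0`, then the pencil has a right approximate polynomial
sequence. -/
theorem stmt_7 (E A : X →ₗ.[ℂ] Y) :
    ((∃ (k : ℕ → ℕ) (a : ℕ → ℕ → X), IsRAPS E A k a) →
      (∃ x : ℕ → X, (∀ n, x n ∈ A.domain) ∧ (∀ n, ‖x n‖ = 1) ∧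
        Tendsto (fun n => pap A (x n)) atTop (𝓝 (0 : Y))) ∧
      (∃ y : ℕ → X, (∀ n, y n ∈ E.domain) ∧ (∀ n, ‖y n‖ = 1) ∧
        Tendsto (fun n => pap E (y n)) atTop (𝓝 (0 : Y)))) ∧
    ((∃ x : ℕ → X, (∀ n, x n ∈ E.domain ∧ x n ∈ A.domain) ∧ (∀ n, ‖x n‖ = 1) ∧
        Tendsto (fun n => pap A (x n)) atTop (𝓝 (0 : Y)) ∧
        Tendsto (fun n => pap E (x n)) atTop (𝓝 (0 : Y))) →
      ∃ (k : ℕ → ℕ) (a : ℕ → ℕ → X), IsRAPS E A k a) := by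
  constructor
  · rintro ⟨k, a, hdom, hlam⟩
    obtain ⟨-, -, hp, hrev, hAp, hErev⟩ := hlam 0
    exact ⟨exists_unit_seq_tendsto_zero A (fun n => (hdom n 0).2.1) hp (by simpa using hAp.neg),
      exists_unit_seq_tendsto_zero E (fun n => (hdom n 0).2.2.1) hrev (by simpa using hErev.neg)⟩
  · rintro ⟨x, hdom, hnorm, hA, hE⟩
    exact ⟨_, _, isRAPS_const E A hdom hnorm hA hE⟩
end
end

section
/- Let E : X → Y be a bounded linear operator and A a closed, densely defined linear operator from D(A) ⊆ X to Y. If the pencil λE − A has a right singular polynomial, then there exists a nonzero X-valued polynomial function f such that f(0) = 0, f(t) ∈ D(A) for every t ∈ ℝ, and E f′(t) = A f(t) for every t ∈ ℝ. In particular, the Cauchy problem E ẋ(t) = A x(t), x(0) = 0, has a nonzero classical solution. -/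
open Filter Topology

noncomputable section

variable {X Y : Type*}
  [NormedAddCommGroup X] [InnerProductSpace ℂ X] [CompleteSpace X]
  [NormedAddCommGroup Y] [InnerProductSpace ℂ Y] [CompleteSpace Y]

/-- The pencil `λE - A` (with `E` bounded) has a right singular polynomial: a nonzero
`X`-valued polynomial `p` with `p(λ0) ∈ D(A)` and `(λ0 E - A) p(λ0) = 0` for all `λ0`. -/
def HasRightSingularPoly (E : X →L[ℂ] Y) (A : X →ₗ.[ℂ] Y) : Prop :=
  ∃ (k : ℕ) (a : ℕ → X), (∃ j ≤ k, a j ≠ 0) ∧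
    ∀ lam : ℂ, polyEval a k lam ∈ A.domain ∧
      lam • E (polyEval a k lam) - pap A (polyEval a k lam) = 0

/-!
Comparing coefficients in `λ E p(λ) = A p(λ)` for `p(λ) = ∑_{j ≤ k} λ^j a_j` shows that the
coefficients lie in `D(A)` and form a chain `A a₀ = 0`, `A a_{j+1} = E a_j`, `E a_k = 0`.
Running the chain backwards, `f(t) = ∑_{i=1}^{k+1} t^i / i! · a_{k+1-i}` has
`f'(t) = ∑_{i=0}^{k} t^i / i! · a_{k-i}`, and the chain relations turn `E f'(t)` term by term
into `A f(t)`.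
-/

open Finset
open scoped Nat

section CoeffExtraction

variable {K V : Type*} [Field K] [Infinite K] [AddCommGroup V] [Module K V]

theorem eq_zero_of_forall_sum_pow_smul_eq_zero {g : ℕ → V} {n : ℕ}
    (h : ∀ x : K, ∑ j ∈ range n, x ^ j • g j = 0) {j : ℕ} (hj : j < n) : g j = 0 := by
  rw [← Module.forall_dual_apply_eq_zero_iff K]
  intro ℓ
  let P : Polynomial K := ∑ i ∈ range n, Polynomial.C (ℓ (g i)) * Polynomial.X ^ i
  have hP : P = 0 := Polynomial.zero_of_eval_zero _ fun x => by
    have hx := congrArg ℓ (h x)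
    simp only [map_sum, map_smul, smul_eq_mul, map_zero] at hx
    simp only [P, Polynomial.eval_finsetSum, Polynomial.eval_mul, Polynomial.eval_C,
      Polynomial.eval_pow, Polynomial.eval_X]
    simpa only [mul_comm] using hx
  simpa [P, Polynomial.finsetSum_coeff, hj] using congrArg (Polynomial.coeff · j) hP

theorem mem_of_forall_sum_pow_smul_mem {p : Submodule K V} {g : ℕ → V} {n : ℕ}
    (h : ∀ x : K, ∑ j ∈ range n, x ^ j • g j ∈ p) {j : ℕ} (hj : j < n) : g j ∈ p := by
  rw [← Submodule.Quotient.mk_eq_zero]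
  refine eq_zero_of_forall_sum_pow_smul_eq_zero (K := K) (g := fun j => p.mkQ (g j))
    (fun x => ?_) hj
  have hx : p.mkQ (∑ j ∈ range n, x ^ j • g j) = 0 :=
    (Submodule.Quotient.mk_eq_zero p).2 (h x)
  simpa only [map_sum, map_smul] using hx

theorem coeff_shift_of_forall_smul_sum_pow_smul_eq {u v : ℕ → V} {n : ℕ}
    (hu : ∀ j ≥ n, u j = 0) (hv : ∀ j ≥ n, v j = 0)
    (h : ∀ x : K, x • ∑ j ∈ range n, x ^ j • u j = ∑ j ∈ range n, x ^ j • v j) :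
    v 0 = 0 ∧ ∀ j, v (j + 1) = u j := by
  -- the coefficients of `x • ∑ x^j u_j - ∑ x^j v_j`
  let g : ℕ → V := fun j => (Nat.casesOn j 0 u : V) - v j
  have hg : ∀ x : K, ∑ j ∈ range (n + 1), x ^ j • g j = 0 := fun x => by
    simp only [g, smul_sub, sum_sub_distrib]
    rw [sum_range_succ' _ n, sum_range_succ _ n, hv n le_rfl, ← h x, smul_sum]
    simp [pow_succ', mul_smul]
  have hg0 : ∀ j, g j = 0 := fun j => by
    rcases lt_or_ge j (n + 1) with hj | hj
    · exact eq_zero_of_forall_sum_pow_smul_eq_zero hg hj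
    · obtain ⟨i, rfl⟩ := Nat.exists_eq_add_of_le' (by omega : 1 ≤ j)
      simp [g, hu i (by omega), hv (i + 1) (by omega)]
  exact ⟨by simpa [g] using hg0 0, fun j => (sub_eq_zero.1 (hg0 (j + 1))).symm⟩

end CoeffExtraction

section PartialApplication

variable {W Z : Type*} [NormedAddCommGroup W] [InnerProductSpace ℂ W]
  [NormedAddCommGroup Z] [InnerProductSpace ℂ Z] (A : W →ₗ.[ℂ] Z)

theorem pap_of_mem_s12 {x : W} (hx : x ∈ A.domain) : pap A x = A ⟨x, hx⟩ :=
  dif_pos hx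

theorem pap_zero : pap A 0 = 0 := by
  rw [pap_of_mem_s12 A A.domain.zero_mem]
  exact A.map_zero

theorem pap_add {x y : W} (hx : x ∈ A.domain) (hy : y ∈ A.domain) :
    pap A (x + y) = pap A x + pap A y := by
  rw [pap_of_mem_s12 A (A.domain.add_mem hx hy), pap_of_mem_s12 A hx, pap_of_mem_s12 A hy, ← A.map_add]
  rfl

theorem pap_smul_s12 {S : Type*} [SMul S ℂ] [SMul S W] [SMul S Z] [IsScalarTower S ℂ W]
    [IsScalarTower S ℂ Z] (c : S) {x : W} (hx : x ∈ A.domain) :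
    pap A (c • x) = c • pap A x := by
  rw [pap_of_mem_s12 A (A.domain.smul_of_tower_mem c hx), pap_of_mem_s12 A hx]
  exact A.toFun.map_smul_of_tower c ⟨x, hx⟩

theorem pap_sum {ι : Type*} (s : Finset ι) {g : ι → W} (hg : ∀ i ∈ s, g i ∈ A.domain) :
    pap A (∑ i ∈ s, g i) = ∑ i ∈ s, pap A (g i) := by
  induction s using Finset.cons_induction with
  | empty => simp [pap_zero]
  | cons i s hi ih =>
    simp only [forall_mem_cons] at hg
    rw [sum_cons, sum_cons, pap_add A hg.1 (A.domain.sum_mem hg.2), ih hg.2]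

end PartialApplication

section PolynomialCurves

variable {V : Type*} [NormedAddCommGroup V] [NormedSpace ℝ V]

def coeffDeriv (b : ℕ → V) (j : ℕ) : V :=
  ((j : ℝ) + 1) • b (j + 1)

theorem hasDerivAt_sum_pow_smul (b : ℕ → V) (n : ℕ) (t : ℝ) :
    HasDerivAt (fun s : ℝ => ∑ j ∈ range (n + 1), s ^ j • b j)
      (∑ j ∈ range n, t ^ j • coeffDeriv b j) t := by
  convert HasDerivAt.fun_sum (u := range (n + 1))
    fun j _ => (hasDerivAt_pow j t).smul_const (b j) using 1
  rw [sum_range_succ']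
  simp [coeffDeriv, smul_smul, mul_comm]

end PolynomialCurves

section PencilChains

variable {W Z : Type*} [NormedAddCommGroup W] [InnerProductSpace ℂ W]
  [NormedAddCommGroup Z] [InnerProductSpace ℂ Z] (E : W →L[ℂ] Z) (A : W →ₗ.[ℂ] Z)

theorem map_sum_coeffDeriv_eq_pap {b : ℕ → W} {n : ℕ} (hmem : ∀ j ≤ n, b j ∈ A.domain)
    (hcoeff : ∀ j < n, E (coeffDeriv b j) = pap A (b j)) (hlast : pap A (b n) = 0) (t : ℝ) :
    E (∑ j ∈ range n, t ^ j • coeffDeriv b j) =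
      pap A (∑ j ∈ range (n + 1), t ^ j • b j) := by
  rw [pap_sum A _ fun j hj =>
      A.domain.smul_of_tower_mem _ (hmem j (Nat.lt_succ_iff.1 (mem_range.1 hj))),
    sum_range_succ, pap_smul_s12 A _ (hmem n le_rfl), hlast, smul_zero, add_zero, map_sum]
  refine sum_congr rfl fun j hj => ?_
  rw [E.map_smul_of_tower, hcoeff j (mem_range.1 hj), pap_smul_s12 A _ (hmem j (mem_range.1 hj).le)]

/-- With `pap_succ k`, the condition `c (k + 1) = 0` is the end `E c_k = 0` of the chain. -/
structure IsSingularChain (k : ℕ) (c : ℕ → W) : Prop where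
  mem : ∀ j, c j ∈ A.domain
  pap_zero : pap A (c 0) = 0
  pap_succ : ∀ j, pap A (c (j + 1)) = E (c j)
  succ_eq_zero : c (k + 1) = 0

def chainSolutionCoeff (k : ℕ) (c : ℕ → W) (i : ℕ) : W :=
  ((i ! : ℝ)⁻¹) • c (k + 1 - i)

theorem coeffDeriv_chainSolutionCoeff (k : ℕ) (c : ℕ → W) (j : ℕ) :
    coeffDeriv (chainSolutionCoeff k c) j = ((j ! : ℝ)⁻¹) • c (k - j) := by
  simp only [coeffDeriv, chainSolutionCoeff, smul_smul, Nat.add_sub_add_right]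
  congr 1
  rw [Nat.factorial_succ]
  push_cast
  field_simp

namespace IsSingularChain

variable {E A} {k : ℕ} {c : ℕ → W}

theorem chainSolutionCoeff_zero (hc : IsSingularChain E A k c) :
    chainSolutionCoeff k c 0 = 0 := by
  simp [chainSolutionCoeff, hc.succ_eq_zero]

theorem chainSolutionCoeff_mem (hc : IsSingularChain E A k c) (i : ℕ) :
    chainSolutionCoeff k c i ∈ A.domain :=
  A.domain.smul_of_tower_mem _ (hc.mem _)

theorem map_coeffDeriv_chainSolutionCoeff (hc : IsSingularChain E A k c) {j : ℕ} (hj : j ≤ k) :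
    E (coeffDeriv (chainSolutionCoeff k c) j) = pap A (chainSolutionCoeff k c j) := by
  rw [coeffDeriv_chainSolutionCoeff, chainSolutionCoeff, E.map_smul_of_tower,
    pap_smul_s12 A _ (hc.mem _), show k + 1 - j = k - j + 1 by omega, hc.pap_succ]

theorem pap_chainSolutionCoeff_succ (hc : IsSingularChain E A k c) :
    pap A (chainSolutionCoeff k c (k + 1)) = 0 := by
  rw [chainSolutionCoeff, pap_smul_s12 A _ (hc.mem _), Nat.sub_self, hc.pap_zero, smul_zero]

end IsSingularChain

theorem HasRightSingularPoly.exists_isSingularChain (h : HasRightSingularPoly E A) :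
    ∃ k c, (∃ j ≤ k, c j ≠ 0) ∧ IsSingularChain E A k c := by
  obtain ⟨k, a, ⟨j₀, hj₀k, hj₀⟩, hp⟩ := h
  let c : ℕ → W := fun j => if j ≤ k then a j else 0
  have hc : ∀ j > k, c j = 0 := fun j hj => if_neg (by omega)
  have hpoly : ∀ x : ℂ, polyEval a k x = ∑ j ∈ range (k + 1), x ^ j • c j := fun x =>
    sum_congr rfl fun j hj => by simp [c, Nat.lt_succ_iff.1 (mem_range.1 hj)]
  have hmem : ∀ j, c j ∈ A.domain := fun j => by
    rcases le_or_gt j k with hj | hj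
    · exact mem_of_forall_sum_pow_smul_mem (fun x => hpoly x ▸ (hp x).1) (Nat.lt_succ_of_le hj)
    · rw [hc j hj]
      exact A.domain.zero_mem
  obtain ⟨h0, hsucc⟩ := coeff_shift_of_forall_smul_sum_pow_smul_eq (n := k + 1)
    (u := fun j => E (c j)) (v := fun j => pap A (c j))
    (fun j hj => by simp [hc j hj]) (fun j hj => by simp [hc j hj, pap_zero]) fun x => by
      have hx := sub_eq_zero.1 (hp x).2
      rw [hpoly, map_sum, pap_sum A _ fun j _ => A.domain.smul_mem _ (hmem j)] at hx
      simpa only [map_smul, pap_smul_s12 A _ (hmem _)] using hx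
  exact ⟨k, c, ⟨j₀, hj₀k, by simpa [c, hj₀k] using hj₀⟩,
    ⟨hmem, h0, hsucc, hc (k + 1) (by omega)⟩⟩

end PencilChains

theorem stmt_12_general (E : X →L[ℂ] Y) (A : X →ₗ.[ℂ] Y)
    (h : HasRightSingularPoly E A) :
    ∃ (k : ℕ) (b : ℕ → X),
      (∃ j ≤ k, b j ≠ 0) ∧
      b 0 = 0 ∧
      (∀ t : ℝ, (∑ j ∈ Finset.range (k + 1), t ^ j • b j) ∈ A.domain) ∧
      (∀ t : ℝ, ∃ v : X,
        HasDerivAt (fun s : ℝ => ∑ j ∈ Finset.range (k + 1), s ^ j • b j) v t ∧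
        E v = pap A (∑ j ∈ Finset.range (k + 1), t ^ j • b j)) := by
  obtain ⟨k, c, ⟨j, hjk, hcj⟩, hc⟩ := h.exists_isSingularChain
  refine ⟨k + 1, chainSolutionCoeff k c, ⟨k + 1 - j, by omega, ?_⟩, hc.chainSolutionCoeff_zero,
    fun _ => A.domain.sum_mem fun i _ =>
      A.domain.smul_of_tower_mem _ (hc.chainSolutionCoeff_mem i),
    fun t => ⟨_, hasDerivAt_sum_pow_smul _ _ t, map_sum_coeffDeriv_eq_pap E A
      (fun i _ => hc.chainSolutionCoeff_mem i)
      (fun i hi => hc.map_coeffDeriv_chainSolutionCoeff (Nat.lt_succ_iff.1 hi))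
      hc.pap_chainSolutionCoeff_succ t⟩⟩
  rw [chainSolutionCoeff, show k + 1 - (k + 1 - j) = j by omega]
  exact smul_ne_zero (by positivity) hcj

/-- If the pencil `λE - A` has a right singular polynomial, then there is a nonzero
`X`-valued polynomial function `f(t) = ∑_{j=0}^k t^j b_j` with `f(0) = 0`, `f(t) ∈ D(A)`
for all real `t`, and `E f'(t) = A f(t)` for all real `t`; that is, the Cauchy problem
`E ẋ = A x`, `x(0) = 0` has a nonzero classical solution. -/
theorem stmt_12 (E : X →L[ℂ] Y) (A : X →ₗ.[ℂ] Y)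
    (hdense : Dense (A.domain : Set X)) (hclosed : IsClosed (A.graph : Set (X × Y)))
    (h : HasRightSingularPoly E A) :
    ∃ (k : ℕ) (b : ℕ → X),
      (∃ j ≤ k, b j ≠ 0) ∧
      b 0 = 0 ∧
      (∀ t : ℝ, (∑ j ∈ Finset.range (k + 1), t ^ j • b j) ∈ A.domain) ∧
      (∀ t : ℝ, ∃ v : X,
        HasDerivAt (fun s : ℝ => ∑ j ∈ Finset.range (k + 1), s ^ j • b j) v t ∧
        E v = pap A (∑ j ∈ Finset.range (k + 1), t ^ j • b j)) :=
  stmt_12_general E A h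
end
end

section
/- Consider the dissipative Hamiltonian operator pencil P(λ) = λE − BQ. Let λ0 ∈ ℂ with Re λ0 > 0 and let (x_n) be a bounded sequence with x_n ∈ D(BQ) for all n. Then (λ0E − BQ)x_n → 0 as n → ∞ if and only if both E x_n → 0 and BQ x_n → 0 as n → ∞. In particular, ker(λ0E − BQ) = {x ∈ D(BQ) : Ex = 0 and BQx = 0}. -/
/-!
Pair `P(λ₀) v` with `Q v`. Since `⟪E v, Q v⟫ = ⟪Q* E v, v⟫` is real and nonnegative and `B` is
dissipative, `Re λ₀ · ⟪Q* E v, v⟫ ≤ Re ⟪P(λ₀) v, Q v⟫ ≤ ‖P(λ₀) v‖ ‖Q‖ ‖v‖`. Along a bounded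
sequence with `P(λ₀) xₙ → 0` the quadratic form of the positive operator `Q* E` therefore tends
to `0`, and Cauchy–Schwarz for that form, `‖T x‖² ≤ ‖T‖ ⟪T x, x⟫`, gives `Q* E xₙ → 0`. As `Q*`
has the bounded inverse `(Q⁻¹)*`, `E xₙ → 0`, and then `BQ xₙ = λ₀ E xₙ - P(λ₀) xₙ → 0`.
-/

open Filter Topology
open scoped InnerProductSpace

noncomputable section

variable {X Y : Type*}
  [NormedAddCommGroup X] [InnerProductSpace ℂ X] [CompleteSpace X]
  [NormedAddCommGroup Y] [InnerProductSpace ℂ Y] [CompleteSpace Y]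

/-- Application of the composition `BQ` (with domain `{x | Qx ∈ D(B)}`),
extended by `0` outside the domain. -/
noncomputable def BQap (Q : X →L[ℂ] Y) (B : Y →ₗ.[ℂ] Y) (x : X) : Y :=
  haveI := Classical.dec (Q x ∈ B.domain)
  if h : Q x ∈ B.domain then B ⟨Q x, h⟩ else 0

open ContinuousLinearMap

namespace ContinuousLinearMap.IsPositive

variable {𝕜 H : Type*} [RCLike 𝕜] [NormedAddCommGroup H] [InnerProductSpace 𝕜 H]
  {T : H →L[𝕜] H}

theorem norm_inner_mul_norm_inner_le (hT : T.IsPositive) (x y : H) :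
    ‖⟪T x, y⟫_𝕜‖ * ‖⟪T y, x⟫_𝕜‖ ≤ RCLike.re ⟪T x, x⟫_𝕜 * RCLike.re ⟪T y, y⟫_𝕜 :=
  @InnerProductSpace.Core.inner_mul_inner_self_le 𝕜 H _ _ _
    { inner := fun u v => ⟪T u, v⟫_𝕜
      conj_inner_symm := fun u v => by rw [inner_conj_symm, hT.inner_left_eq_inner_right]
      re_inner_nonneg := hT.re_inner_nonneg_left
      add_left := fun u v w => by simp only [map_add, inner_add_left]
      smul_left := fun u v r => by simp only [map_smul, inner_smul_left] } x y

theorem norm_apply_sq_le (hT : T.IsPositive) (x : H) :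
    ‖T x‖ ^ 2 ≤ ‖T‖ * RCLike.re ⟪T x, x⟫_𝕜 := by
  have cs := hT.norm_inner_mul_norm_inner_le x (T x)
  rw [hT.inner_left_eq_inner_right (T x) x, inner_self_eq_norm_sq_to_K, norm_pow,
    RCLike.norm_ofReal, abs_norm] at cs
  have hTT : RCLike.re ⟪T (T x), T x⟫_𝕜 ≤ ‖T‖ * ‖T x‖ ^ 2 :=
    calc RCLike.re ⟪T (T x), T x⟫_𝕜 ≤ ‖T (T x)‖ * ‖T x‖ := re_inner_le_norm _ _
      _ ≤ ‖T‖ * ‖T x‖ * ‖T x‖ := by gcongr; exact T.le_opNorm _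
      _ = ‖T‖ * ‖T x‖ ^ 2 := by ring
  have hre := hT.re_inner_nonneg_left x
  rcases (sq_nonneg ‖T x‖).eq_or_lt with h0 | hpos
  · rw [← h0]; exact mul_nonneg (norm_nonneg T) hre
  · refine le_of_mul_le_mul_right (cs.trans ?_) hpos
    calc RCLike.re ⟪T x, x⟫_𝕜 * RCLike.re ⟪T (T x), T x⟫_𝕜
        ≤ RCLike.re ⟪T x, x⟫_𝕜 * (‖T‖ * ‖T x‖ ^ 2) := mul_le_mul_of_nonneg_left hTT hre
      _ = ‖T‖ * RCLike.re ⟪T x, x⟫_𝕜 * ‖T x‖ ^ 2 := by ring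

theorem tendsto_apply_nhds_zero (hT : T.IsPositive) {ι : Type*} {l : Filter ι} {x : ι → H}
    (hx : Tendsto (fun n => RCLike.re ⟪T (x n), x n⟫_𝕜) l (𝓝 0)) :
    Tendsto (fun n => T (x n)) l (𝓝 0) := by
  have hsq : Tendsto (fun n => ‖T (x n)‖ ^ 2) l (𝓝 0) :=
    squeeze_zero (fun n => by positivity) (fun n => hT.norm_apply_sq_le (x n))
      (by simpa using hx.const_mul ‖T‖)
  rw [tendsto_zero_iff_norm_tendsto_zero]
  simpa [Real.sqrt_sq (norm_nonneg _)] using hsq.sqrt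

end ContinuousLinearMap.IsPositive

theorem ContinuousLinearMap.tendsto_nhds_zero_of_tendsto_adjoint {𝕜 H K : Type*} [RCLike 𝕜]
    [NormedAddCommGroup H] [InnerProductSpace 𝕜 H] [CompleteSpace H]
    [NormedAddCommGroup K] [InnerProductSpace 𝕜 K] [CompleteSpace K]
    {Q : H →L[𝕜] K} {Qi : K →L[𝕜] H} (hQi : Function.RightInverse Qi Q)
    {ι : Type*} {l : Filter ι} {y : ι → K} (hy : Tendsto (fun n => adjoint Q (y n)) l (𝓝 0)) :
    Tendsto y l (𝓝 0) := by
  have hinv : ∀ v, adjoint Qi (adjoint Q v) = v := by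
    intro v
    rw [← comp_apply, ← adjoint_comp, show Q ∘L Qi = .id 𝕜 K from ext hQi, adjoint_id, id_apply]
  simpa [Function.comp_def, hinv] using ((adjoint Qi).continuous.tendsto 0).comp hy

section Pencil

def pencil (E Q : X →L[ℂ] Y) (B : Y →ₗ.[ℂ] Y) (lam : ℂ) (x : X) : Y :=
  lam • E x - BQap Q B x

variable {E Q : X →L[ℂ] Y} {B : Y →ₗ.[ℂ] Y}

theorem re_mul_re_inner_le_re_inner_pencil (hQE : (adjoint Q ∘L E).IsPositive)
    (hBdiss : ∀ y : B.domain, (⟪B y, (y : Y)⟫_ℂ).re ≤ 0) (lam : ℂ) {v : X}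
    (hv : Q v ∈ B.domain) :
    lam.re * (⟪(adjoint Q ∘L E) v, v⟫_ℂ).re ≤ (⟪pencil E Q B lam v, Q v⟫_ℂ).re := by
  have him : (⟪(adjoint Q ∘L E) v, v⟫_ℂ).im = 0 :=
    ((Complex.nonneg_iff.mp (hQE.inner_nonneg_left v)).2).symm
  have hEQ : ⟪E v, Q v⟫_ℂ = ⟪(adjoint Q ∘L E) v, v⟫_ℂ := (adjoint_inner_left Q v (E v)).symm
  have hBQ : BQap Q B v = B ⟨Q v, hv⟩ := dif_pos hv
  rw [pencil, inner_sub_left, inner_smul_left, hEQ, hBQ, Complex.sub_re]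
  simp only [Complex.mul_re, Complex.conj_re, Complex.conj_im, him, mul_zero, sub_zero]
  linarith [hBdiss ⟨Q v, hv⟩]

theorem tendsto_pencil_nhds_zero_iff {Qi : Y →L[ℂ] X} (hQi : Function.RightInverse Qi Q)
    (hQE : (adjoint Q ∘L E).IsPositive) (hBdiss : ∀ y : B.domain, (⟪B y, (y : Y)⟫_ℂ).re ≤ 0)
    {lam : ℂ} (hlam : 0 < lam.re) {ι : Type*} {l : Filter ι} {x : ι → X}
    (hx : ∀ n, Q (x n) ∈ B.domain) (hbdd : ∃ C : ℝ, ∀ n, ‖x n‖ ≤ C) :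
    Tendsto (fun n => pencil E Q B lam (x n)) l (𝓝 0) ↔
      Tendsto (fun n => E (x n)) l (𝓝 0) ∧ Tendsto (fun n => BQap Q B (x n)) l (𝓝 0) := by
  constructor
  · intro hP
    obtain ⟨C, hC⟩ := hbdd
    have hre : Tendsto (fun n => (⟪(adjoint Q ∘L E) (x n), x n⟫_ℂ).re) l (𝓝 0) := by
      refine squeeze_zero (fun n => hQE.re_inner_nonneg_left _) (fun n => ?_)
        (by simpa using (hP.norm.mul_const (‖Q‖ * C)).div_const lam.re)
      rw [le_div_iff₀ hlam, mul_comm]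
      calc lam.re * (⟪(adjoint Q ∘L E) (x n), x n⟫_ℂ).re
          ≤ (⟪pencil E Q B lam (x n), Q (x n)⟫_ℂ).re :=
            re_mul_re_inner_le_re_inner_pencil hQE hBdiss lam (hx n)
        _ ≤ ‖pencil E Q B lam (x n)‖ * ‖Q (x n)‖ := re_inner_le_norm (𝕜 := ℂ) _ _
        _ ≤ ‖pencil E Q B lam (x n)‖ * (‖Q‖ * C) := by
            gcongr; exact Q.le_of_opNorm_le_of_le le_rfl (hC n)
    have hE := tendsto_nhds_zero_of_tendsto_adjoint hQi (hQE.tendsto_apply_nhds_zero hre)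
    exact ⟨hE, by simpa [pencil] using (hE.const_smul lam).sub hP⟩
  · rintro ⟨hE, hBQ⟩
    simpa [pencil] using (hE.const_smul lam).sub hBQ

end Pencil

theorem stmt_13_general (E Q : X →L[ℂ] Y) (B : Y →ₗ.[ℂ] Y)
    (hQinv : ∃ Qi : Y →L[ℂ] X, (∀ x, Qi (Q x) = x) ∧ (∀ y, Q (Qi y) = y))
    (hQE : IsSelfAdjoint ((ContinuousLinearMap.adjoint Q).comp E))
    (hQEnn : ∀ x : X, 0 ≤ (⟪((ContinuousLinearMap.adjoint Q).comp E) x, x⟫_ℂ).re)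
    (hBdiss : ∀ y : B.domain, (⟪B y, (y : Y)⟫_ℂ).re ≤ 0)
    (lam0 : ℂ) (hlam0 : 0 < lam0.re)
    (x : ℕ → X) (hx : ∀ n, Q (x n) ∈ B.domain)
    (hbdd : ∃ C : ℝ, ∀ n, ‖x n‖ ≤ C) :
    (Tendsto (fun n => lam0 • E (x n) - BQap Q B (x n)) atTop (𝓝 (0 : Y)) ↔
      Tendsto (fun n => E (x n)) atTop (𝓝 (0 : Y)) ∧
      Tendsto (fun n => BQap Q B (x n)) atTop (𝓝 (0 : Y))) ∧
    (∀ v : X, Q v ∈ B.domain →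
      (lam0 • E v - BQap Q B v = 0 ↔ E v = 0 ∧ BQap Q B v = 0)) := by
  obtain ⟨Qi, -, hQi⟩ := hQinv
  have hT : (adjoint Q ∘L E).IsPositive := isPositive_def'.2 ⟨hQE, hQEnn⟩
  refine ⟨tendsto_pencil_nhds_zero_iff hQi hT hBdiss hlam0 hx hbdd, fun v hv => ?_⟩
  simpa [pencil, tendsto_const_nhds_iff] using
    tendsto_pencil_nhds_zero_iff (l := atTop) (x := fun _ : ℕ => v) hQi hT hBdiss hlam0
      (fun _ => hv) ⟨‖v‖, fun _ => le_rfl⟩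

/-- For the dissipative Hamiltonian pencil `P(λ) = λE - BQ` and `Re λ0 > 0`, a bounded
sequence `xₙ ∈ D(BQ)` satisfies `(λ0 E - BQ) xₙ → 0` iff `E xₙ → 0` and `BQ xₙ → 0`;
in particular `ker (λ0 E - BQ) = ker E ∩ ker BQ` (within `D(BQ)`). -/
theorem stmt_13 (E Q : X →L[ℂ] Y) (B : Y →ₗ.[ℂ] Y)
    (hQinv : ∃ Qi : Y →L[ℂ] X, (∀ x, Qi (Q x) = x) ∧ (∀ y, Q (Qi y) = y))
    (hQE : IsSelfAdjoint ((ContinuousLinearMap.adjoint Q).comp E))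
    (hQEnn : ∀ x : X, 0 ≤ (⟪((ContinuousLinearMap.adjoint Q).comp E) x, x⟫_ℂ).re)
    (hBdense : Dense (B.domain : Set Y)) (hBclosed : IsClosed (B.graph : Set (Y × Y)))
    (hBdiss : ∀ y : B.domain, (⟪B y, (y : Y)⟫_ℂ).re ≤ 0)
    (lam0 : ℂ) (hlam0 : 0 < lam0.re)
    (x : ℕ → X) (hx : ∀ n, Q (x n) ∈ B.domain)
    (hbdd : ∃ C : ℝ, ∀ n, ‖x n‖ ≤ C) :
    (Tendsto (fun n => lam0 • E (x n) - BQap Q B (x n)) atTop (𝓝 (0 : Y)) ↔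
      Tendsto (fun n => E (x n)) atTop (𝓝 (0 : Y)) ∧
      Tendsto (fun n => BQap Q B (x n)) atTop (𝓝 (0 : Y))) ∧
    (∀ v : X, Q v ∈ B.domain →
      (lam0 • E v - BQap Q B v = 0 ↔ E v = 0 ∧ BQap Q B v = 0)) :=
  stmt_13_general E Q B hQinv hQE hQEnn hBdiss lam0 hlam0 x hx hbdd
end
end

section
/- Consider the dissipative Hamiltonian setting with pencil λE − BQ. The following are equivalent: (c') {x ∈ D(BQ) : Ex = 0 and BQx = 0} = {0}; (e') for every x0 ∈ X, every T > 0, and any two mild solutions x1, x2 on [0, T] of the Cauchy problem E ẋ(t) = BQ x(t), x(0) = x0, one has x1(t) = x2(t) for all t ∈ [0, T]. -/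
/-!
Let `x` be the difference of two mild solutions and `u t = ∫₀ᵗ x`, so that `E x = BQ u` and
`u(0) = 0`. The energy `⟨Q*E u, u⟩` is nonnegative, vanishes at `0`, and its derivative
`2 Re ⟨Q*E x, u⟩ = 2 Re ⟨BQ u, Q u⟩` is nonpositive by dissipativity, so it vanishes identically.
Positivity of `Q*E` and surjectivity of `Q` then give `E u = 0`, hence `E x = E u' = 0` and
`BQ u = E x = 0`. As `B` is closed, the kernel of `BQ` is closed, so it also contains
`x = u'`: thus `x(t) ∈ ker E ∩ ker BQ = {0}`. Conversely, if `0 ≠ v ∈ ker E ∩ ker BQ`, then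
`t ↦ v` and `t ↦ (1 - t) v` are two different mild solutions starting at `v`.
-/

open Filter Topology
open scoped InnerProductSpace

noncomputable section

variable {X Y : Type*}
  [NormedAddCommGroup X] [InnerProductSpace ℂ X] [CompleteSpace X]
  [NormedAddCommGroup Y] [InnerProductSpace ℂ Y] [CompleteSpace Y]

def IsMildSolution (E Q : X →L[ℂ] Y) (B : Y →ₗ.[ℂ] Y) (x0 : X) (T : ℝ)
    (x : ℝ → X) : Prop :=
  ContinuousOn x (Set.Icc (0 : ℝ) T) ∧ x 0 = x0 ∧
  ∀ t ∈ Set.Icc (0 : ℝ) T,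
    Q (∫ s in (0 : ℝ)..t, x s) ∈ B.domain ∧
    E (x t) - BQap Q B (∫ s in (0 : ℝ)..t, x s) = E x0

theorem HasDerivWithinAt.mem_of_forall_mem {𝕜 F : Type*} [NontriviallyNormedField 𝕜]
    [NormedAddCommGroup F] [NormedSpace 𝕜 F] {K : Submodule 𝕜 F} (hK : IsClosed (K : Set F))
    {u : 𝕜 → F} {v : F} {s : Set 𝕜} {t : 𝕜} (hu : HasDerivWithinAt u v s t)
    (hs : UniqueDiffWithinAt 𝕜 s t) (hmem : ∀ r ∈ s, u r ∈ K) : v ∈ K := by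
  rw [← hu.derivWithin hs]
  refine closure_minimal ?_ hK (range_derivWithin_subset_closure_span_image u (s := s) (t := s)
    (by simpa using subset_closure) ⟨t, rfl⟩)
  exact Submodule.span_le.mpr (Set.image_subset_iff.mpr hmem)

namespace ContinuousLinearMap

variable {H : Type*} [NormedAddCommGroup H] [InnerProductSpace ℂ H] [CompleteSpace H]

theorem eq_zero_of_adjoint_apply_eq_zero {F : Type*} [NormedAddCommGroup F]
    [InnerProductSpace ℂ F] [CompleteSpace F] {T : H →L[ℂ] F} (hT : Function.Surjective T)
    {y : F} (hy : adjoint T y = 0) : y = 0 := by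
  obtain ⟨x, rfl⟩ := hT y
  rw [← inner_self_eq_zero (𝕜 := ℂ), ← adjoint_inner_left, hy, inner_zero_left]

theorem IsPositive.apply_eq_zero_of_re_inner_self_eq_zero {A : H →L[ℂ] H} (hA : A.IsPositive)
    {u : H} (hu : (⟪A u, u⟫_ℂ).re = 0) : A u = 0 := by
  obtain ⟨S, rfl⟩ :=
    CStarAlgebra.nonneg_iff_eq_star_mul_self.mp ((nonneg_iff_isPositive _).mpr hA)
  have hSu : S u = 0 := by
    rw [star_eq_adjoint, mul_def, comp_apply, adjoint_inner_left] at hu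
    exact (re_inner_self_nonpos (𝕜 := ℂ)).mp hu.le
  simp [hSu]

/-- `re ⟪A (v s), u s⟫` is half the derivative of the energy `re ⟪A (u s), u s⟫`. -/
theorem IsPositive.apply_eq_zero_of_re_inner_deriv_nonpos {A : H →L[ℂ] H} (hA : A.IsPositive)
    {u v : ℝ → H} {T : ℝ} (hu : ∀ s ∈ Set.Icc 0 T, HasDerivAt u (v s) s) (hu0 : u 0 = 0)
    (hv : ∀ s ∈ Set.Ioo 0 T, (⟪A (v s), u s⟫_ℂ).re ≤ 0) :
    ∀ s ∈ Set.Icc 0 T, A (u s) = 0 := by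
  set f : ℝ → ℝ := fun s => (⟪A (u s), u s⟫_ℂ).re
  have hf : ∀ s ∈ Set.Icc 0 T, HasDerivAt f (2 * (⟪A (v s), u s⟫_ℂ).re) s := by
    intro s hs
    refine (Complex.reCLM.hasFDerivAt.comp_hasDerivAt s
      (((A.restrictScalars ℝ).hasFDerivAt.comp_hasDerivAt s (hu s hs)).inner ℂ
        (hu s hs))).congr_deriv ?_
    simp only [Function.comp_apply, Complex.reCLM_apply, Complex.add_re, coe_restrictScalars']
    rw [hA.inner_left_eq_inner_right (u s), ← inner_conj_symm, Complex.conj_re]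
    ring
  have hanti : AntitoneOn f (Set.Icc 0 T) := by
    refine antitoneOn_of_deriv_nonpos (convex_Icc 0 T)
      (fun s hs => (hf s hs).continuousAt.continuousWithinAt) (fun s hs => ?_) (fun s hs => ?_)
    all_goals rw [interior_Icc] at hs
    · exact (hf s (Set.Ioo_subset_Icc_self hs)).differentiableAt.differentiableWithinAt
    · rw [(hf s (Set.Ioo_subset_Icc_self hs)).deriv]
      linarith [hv s hs]
  intro s hs
  refine hA.apply_eq_zero_of_re_inner_self_eq_zero (le_antisymm ?_ (hA.re_inner_nonneg_left _))
  simpa [f, hu0] using hanti ⟨le_rfl, hs.1.trans hs.2⟩ hs hs.1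

end ContinuousLinearMap

section

variable {V W : Type*} [NormedAddCommGroup V] [InnerProductSpace ℂ V]
  [NormedAddCommGroup W] [InnerProductSpace ℂ W] {E Q : V →L[ℂ] W} {B : W →ₗ.[ℂ] W}

theorem BQap_of_mem {x : V} (hx : Q x ∈ B.domain) : BQap Q B x = B ⟨Q x, hx⟩ := dif_pos hx

theorem BQap_sub {x y : V} (hx : Q x ∈ B.domain) (hy : Q y ∈ B.domain) :
    BQap Q B (x - y) = BQap Q B x - BQap Q B y := by
  have hxy : Q (x - y) ∈ B.domain := by simpa using sub_mem hx hy
  rw [BQap_of_mem hx, BQap_of_mem hy, BQap_of_mem hxy, ← B.map_sub]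
  congr 1
  ext
  simp

variable (Q B) in
def kerBQ : Submodule ℂ V :=
  (B.graph.comap (LinearMap.inl ℂ W W)).comap (Q : V →ₗ[ℂ] W)

theorem mem_kerBQ_iff {x : V} : x ∈ kerBQ Q B ↔ Q x ∈ B.domain ∧ BQap Q B x = 0 := by
  simp only [kerBQ, Submodule.mem_comap, LinearMap.inl_apply, LinearPMap.mem_graph_iff]
  constructor
  · rintro ⟨y, hy, hBy⟩
    have hx : Q x ∈ B.domain := hy ▸ y.2
    obtain rfl : y = ⟨Q x, hx⟩ := Subtype.ext hy
    exact ⟨hx, by rwa [BQap_of_mem hx]⟩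
  · rintro ⟨hx, hBx⟩
    exact ⟨⟨Q x, hx⟩, rfl, by rwa [BQap_of_mem hx] at hBx⟩

theorem isClosed_kerBQ (hB : IsClosed (B.graph : Set (W × W))) :
    IsClosed (kerBQ Q B : Set V) :=
  hB.preimage ((continuous_id.prodMk continuous_const).comp Q.continuous)

theorem IsMildSolution.sub {x0 : V} {T : ℝ} {x₁ x₂ : ℝ → V}
    (h₁ : IsMildSolution E Q B x0 T x₁) (h₂ : IsMildSolution E Q B x0 T x₂) :
    IsMildSolution E Q B 0 T (x₁ - x₂) := by
  obtain ⟨hc₁, h0₁, hm₁⟩ := h₁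
  obtain ⟨hc₂, h0₂, hm₂⟩ := h₂
  refine ⟨hc₁.sub hc₂, by simp [h0₁, h0₂], fun t ht => ?_⟩
  have hsub : Set.uIcc 0 t ⊆ Set.Icc 0 T := Set.uIcc_subset_Icc ⟨le_rfl, ht.1.trans ht.2⟩ ht
  obtain ⟨hd₁, he₁⟩ := hm₁ t ht
  obtain ⟨hd₂, he₂⟩ := hm₂ t ht
  simp only [Pi.sub_apply]
  rw [intervalIntegral.integral_sub (hc₁.mono hsub).intervalIntegrable
    (hc₂.mono hsub).intervalIntegrable, map_sub, BQap_sub hd₁ hd₂]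
  refine ⟨sub_mem hd₁ hd₂, ?_⟩
  rw [map_sub, sub_sub_sub_comm, he₁, he₂, sub_self, map_zero]

theorem IsMildSolution.exists_continuous {x0 : V} {T : ℝ} {x : ℝ → V}
    (h : IsMildSolution E Q B x0 T x) (hT : 0 ≤ T) :
    ∃ y, Continuous y ∧ Set.EqOn x y (Set.Icc 0 T) ∧ IsMildSolution E Q B x0 T y := by
  obtain ⟨hc, h0, hm⟩ := h
  set y := Set.IccExtend hT fun s : Set.Icc 0 T => x s
  have hxy : Set.EqOn x y (Set.Icc 0 T) := fun s hs =>
    (Set.IccExtend_of_mem hT (fun s : Set.Icc 0 T => x s) hs).symm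
  have hint : ∀ t ∈ Set.Icc 0 T, ∫ s in (0 : ℝ)..t, y s = ∫ s in (0 : ℝ)..t, x s := fun t ht =>
    intervalIntegral.integral_congr
      (hxy.symm.mono (Set.uIcc_subset_Icc ⟨le_rfl, hT⟩ ht))
  refine ⟨y, continuous_IccExtend_iff.mpr hc.domRestrict, hxy, ?_⟩
  refine ⟨hc.congr hxy.symm, by rw [← hxy ⟨le_rfl, hT⟩, h0], fun t ht => ?_⟩
  rw [hint t ht, ← hxy ht]
  exact hm t ht

theorem isMildSolution_smul_of_mem_kerBQ [CompleteSpace V] {v : V} (hv : v ∈ kerBQ Q B)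
    (hEv : E v = 0) (T : ℝ) {φ : ℝ → ℝ} (hφ : Continuous φ) (hφ0 : φ 0 = 1) :
    IsMildSolution E Q B v T (fun s => φ s • v) := by
  refine ⟨(hφ.smul continuous_const).continuousOn, by simp [hφ0], fun t _ => ?_⟩
  rw [intervalIntegral.integral_smul_const]
  obtain ⟨hd, hz⟩ := mem_kerBQ_iff.mp (Submodule.smul_of_tower_mem _ (∫ s in (0 : ℝ)..t, φ s) hv)
  exact ⟨hd, by simp [hz, hEv]⟩

end

section

variable {E Q : X →L[ℂ] Y} {B : Y →ₗ.[ℂ] Y} {T : ℝ} {x : ℝ → X}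

theorem IsMildSolution.map_integral_eq_zero (hQ : Function.Surjective Q)
    (hA : (ContinuousLinearMap.adjoint Q ∘L E).IsPositive)
    (hdiss : ∀ y : B.domain, (⟪B y, (y : Y)⟫_ℂ).re ≤ 0) (hx : Continuous x)
    (h : IsMildSolution E Q B 0 T x) :
    ∀ s ∈ Set.Icc 0 T, E (∫ r in (0 : ℝ)..s, x r) = 0 := by
  have hAu := hA.apply_eq_zero_of_re_inner_deriv_nonpos (T := T)
    (fun s _ => (hx.integral_hasStrictDerivAt 0 s).hasDerivAt) intervalIntegral.integral_same
    fun s hs => ?_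
  · exact fun s hs => ContinuousLinearMap.eq_zero_of_adjoint_apply_eq_zero hQ (hAu s hs)
  obtain ⟨hd, he⟩ := h.2.2 s (Set.Ioo_subset_Icc_self hs)
  rw [map_zero, sub_eq_zero, BQap_of_mem hd] at he
  rw [ContinuousLinearMap.comp_apply, ContinuousLinearMap.adjoint_inner_left, he]
  exact hdiss ⟨_, hd⟩

theorem IsMildSolution.eq_zero_of_continuous (hQ : Function.Surjective Q)
    (hA : (ContinuousLinearMap.adjoint Q ∘L E).IsPositive)
    (hB : IsClosed (B.graph : Set (Y × Y))) (hdiss : ∀ y : B.domain, (⟪B y, (y : Y)⟫_ℂ).re ≤ 0)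
    (hker : ∀ v ∈ kerBQ Q B, E v = 0 → v = 0) (hT : 0 < T) (hx : Continuous x)
    (h : IsMildSolution E Q B 0 T x) : ∀ t ∈ Set.Icc 0 T, x t = 0 := by
  set u : ℝ → X := fun s => ∫ r in (0 : ℝ)..s, x r
  have hu : ∀ s, HasDerivWithinAt u (x s) (Set.Icc 0 T) s := fun s =>
    (hx.integral_hasStrictDerivAt 0 s).hasDerivAt.hasDerivWithinAt
  have hEx : ∀ s ∈ Set.Icc 0 T, E (x s) = 0 := fun s hs =>
    (hu s).mem_of_forall_mem (K := (LinearMap.ker (E : X →ₗ[ℂ] Y)).restrictScalars ℝ)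
      E.isClosed_ker (uniqueDiffOn_Icc hT s hs) (h.map_integral_eq_zero hQ hA hdiss hx)
  have hu_ker : ∀ s ∈ Set.Icc 0 T, u s ∈ kerBQ Q B := fun s hs => by
    obtain ⟨hd, he⟩ := h.2.2 s hs
    rw [map_zero, hEx s hs, zero_sub, neg_eq_zero] at he
    exact mem_kerBQ_iff.mpr ⟨hd, he⟩
  intro t ht
  exact hker _ ((hu t).mem_of_forall_mem (K := (kerBQ Q B).restrictScalars ℝ)
    (isClosed_kerBQ hB) (uniqueDiffOn_Icc hT t ht) hu_ker) (hEx t ht)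

end

theorem stmt_19_general (E Q : X →L[ℂ] Y) (B : Y →ₗ.[ℂ] Y)
    (hQinv : ∃ Qi : Y →L[ℂ] X, (∀ x, Qi (Q x) = x) ∧ (∀ y, Q (Qi y) = y))
    (hQE : IsSelfAdjoint ((ContinuousLinearMap.adjoint Q).comp E))
    (hQEnn : ∀ x : X, 0 ≤ (⟪((ContinuousLinearMap.adjoint Q).comp E) x, x⟫_ℂ).re)
    (hBclosed : IsClosed (B.graph : Set (Y × Y)))
    (hBdiss : ∀ y : B.domain, (⟪B y, (y : Y)⟫_ℂ).re ≤ 0) :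
    (∀ v : X, Q v ∈ B.domain → E v = 0 → BQap Q B v = 0 → v = 0) ↔
    (∀ (x0 : X) (T : ℝ), 0 < T →
      ∀ x1 x2 : ℝ → X, IsMildSolution E Q B x0 T x1 → IsMildSolution E Q B x0 T x2 →
        ∀ t ∈ Set.Icc (0 : ℝ) T, x1 t = x2 t) := by
  obtain ⟨Qi, -, hQQi⟩ := hQinv
  have hQ : Function.Surjective Q := fun y => ⟨Qi y, hQQi y⟩
  have hA : (ContinuousLinearMap.adjoint Q ∘L E).IsPositive :=
    ContinuousLinearMap.isPositive_def'.mpr ⟨hQE, hQEnn⟩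
  constructor
  · intro hker x0 T hT x1 x2 h1 h2 t ht
    obtain ⟨x, hx, hxeq, hmild⟩ := (h1.sub h2).exists_continuous hT.le
    rw [← sub_eq_zero, ← Pi.sub_apply, hxeq ht]
    refine hmild.eq_zero_of_continuous hQ hA hBclosed hBdiss (fun v hv hEv => ?_) hT hx t ht
    exact hker v (mem_kerBQ_iff.mp hv).1 hEv (mem_kerBQ_iff.mp hv).2
  · intro huniq v hQv hEv hBQv
    have hv : v ∈ kerBQ Q B := mem_kerBQ_iff.mpr ⟨hQv, hBQv⟩
    simpa using huniq v 1 one_pos _ _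
      (isMildSolution_smul_of_mem_kerBQ hv hEv 1 continuous_const rfl)
      (isMildSolution_smul_of_mem_kerBQ hv hEv 1 (continuous_const.sub continuous_id) (sub_zero 1))
      1 ⟨zero_le_one, le_rfl⟩

/-- For the dissipative Hamiltonian pencil `λE - BQ` the following are equivalent:
(c') `ker E ∩ ker BQ = {0}` (within `D(BQ)`); (e') mild solutions of the Cauchy problem
`E ẋ = BQ x`, `x(0) = x0`, are unique. -/
theorem stmt_19 (E Q : X →L[ℂ] Y) (B : Y →ₗ.[ℂ] Y)
    (hQinv : ∃ Qi : Y →L[ℂ] X, (∀ x, Qi (Q x) = x) ∧ (∀ y, Q (Qi y) = y))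
    (hQE : IsSelfAdjoint ((ContinuousLinearMap.adjoint Q).comp E))
    (hQEnn : ∀ x : X, 0 ≤ (⟪((ContinuousLinearMap.adjoint Q).comp E) x, x⟫_ℂ).re)
    (hBdense : Dense (B.domain : Set Y)) (hBclosed : IsClosed (B.graph : Set (Y × Y)))
    (hBdiss : ∀ y : B.domain, (⟪B y, (y : Y)⟫_ℂ).re ≤ 0) :
    (∀ v : X, Q v ∈ B.domain → E v = 0 → BQap Q B v = 0 → v = 0) ↔
    (∀ (x0 : X) (T : ℝ), 0 < T →
      ∀ x1 x2 : ℝ → X, IsMildSolution E Q B x0 T x1 → IsMildSolution E Q B x0 T x2 →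
        ∀ t ∈ Set.Icc (0 : ℝ) T, x1 t = x2 t) :=
  stmt_19_general E Q B hQinv hQE hQEnn hBclosed hBdiss
end
end
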